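/- Angular separation in the wave zone: Let x : ℝ → ℝ³ satisfy x(0) = 0, |t| − C₁ ≤ |x(t)| ≤ |t| + C₁, and |x(t) − (t,0,0)| ≤ C₁|t|^{1/2} for all t ∈ ℝ, for some constant C₁ > 0, and fix R > 0. Fix ν ∈ (0,1) and 0 < ε < 2s_p/(1−ν) − 1. For |t| ≥ N^{1−ε} define 𝒢(t) := { x ∈ ℝ³ : |x − x(sgn(t)·N^{1−ε})| ≤ R + |t| − N^{1−ε} } and C_ext(t) := { x ∈ ℝ³ : |x| ≥ |t| − R }. Then there is a constant A = A(C₁, R) and, for every c > 0, a threshold N₀ = N₀(c, C₁, R) such that for all N ≥ N₀, all t with |t| ≥ N^{1−ε}, and all points x = (x₁, x_{2,3}) ∈ 𝒢(t) ∩ C_ext(t) (with x_{2,3} = (x₂, x₃)) one has |x_{2,3}|/|x| ≤ A·N^{−(1−ε)/2}, and moreover A·N^{−(1−ε)/2} ≤ c·M/N for every M ≥ N^{s_p/(1−ν)}. -/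

import Mathlib

open Set

noncomputable section

abbrev E3 : Type := EuclideanSpace ℝ (Fin 3)

private lemma ptwo_le_norm (v : E3) : Real.sqrt ((v 1) ^ 2 + (v 2) ^ 2) ≤ ‖v‖ := by
  rw [EuclideanSpace.norm_eq]
  apply Real.sqrt_le_sqrt
  rw [Fin.sum_univ_three]
  simp only [Real.norm_eq_abs, sq_abs]
  nlinarith [sq_nonneg (v 0)]

private lemma ptwo_triangle (v w : E3) :
    Real.sqrt ((v 1 + w 1) ^ 2 + (v 2 + w 2) ^ 2) ≤
      Real.sqrt ((v 1) ^ 2 + (v 2) ^ 2) + Real.sqrt ((w 1) ^ 2 + (w 2) ^ 2) := by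
  set a := v 1; set b := v 2; set c := w 1; set d := w 2
  clear_value a b c d
  have h1 : (a * c + b * d) ^ 2 ≤ (a ^ 2 + b ^ 2) * (c ^ 2 + d ^ 2) := by
    nlinarith [sq_nonneg (a * d - b * c)]
  have h2 : a * c + b * d ≤ Real.sqrt (a ^ 2 + b ^ 2) * Real.sqrt (c ^ 2 + d ^ 2) := by
    rw [← Real.sqrt_mul (by positivity)]
    calc a * c + b * d ≤ |a * c + b * d| := le_abs_self _
    _ = Real.sqrt ((a * c + b * d) ^ 2) := (Real.sqrt_sq_eq_abs _).symm
    _ ≤ Real.sqrt ((a ^ 2 + b ^ 2) * (c ^ 2 + d ^ 2)) := Real.sqrt_le_sqrt h1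
  have h3 : (a + c) ^ 2 + (b + d) ^ 2 ≤
      (Real.sqrt (a ^ 2 + b ^ 2) + Real.sqrt (c ^ 2 + d ^ 2)) ^ 2 := by
    have s1 := Real.sq_sqrt (show (0:ℝ) ≤ a ^ 2 + b ^ 2 by positivity)
    have s2 := Real.sq_sqrt (show (0:ℝ) ≤ c ^ 2 + d ^ 2 by positivity)
    nlinarith [h2]
  calc Real.sqrt ((a + c) ^ 2 + (b + d) ^ 2)
      ≤ Real.sqrt ((Real.sqrt (a ^ 2 + b ^ 2) + Real.sqrt (c ^ 2 + d ^ 2)) ^ 2) :=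
        Real.sqrt_le_sqrt h3
    _ = _ := Real.sqrt_sq (by positivity)

set_option maxHeartbeats 1000000 in
private lemma geom_core (C₁ R τ T s : ℝ) (a y : E3)
    (hC₁ : 0 < C₁) (hR : 0 < R) (hτbig : 2 * C₁ + 2 * R + 1 ≤ τ) (hTτ : τ ≤ T)
    (hna1 : τ - C₁ ≤ ‖a‖) (hna2 : ‖a‖ ≤ τ + C₁)
    (hdir : ‖a - s • (EuclideanSpace.single (0 : Fin 3) (1 : ℝ))‖ ≤ C₁ * Real.sqrt τ)
    (hy1 : ‖y - a‖ ≤ R + T - τ) (hy2 : T - R ≤ ‖y‖) :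
    Real.sqrt ((y 1) ^ 2 + (y 2) ^ 2) ≤
      ((Real.sqrt (8 * (2 * R + C₁)) + 2 * C₁ + 1) * (Real.sqrt τ)⁻¹) * ‖y‖ := by
  have hτpos : 0 < τ := by linarith
  set K : ℝ := 2 * R + C₁ with hK
  set ny : ℝ := ‖y‖ with hny
  set na : ℝ := ‖a‖ with hna
  set d : ℝ := ‖y - a‖ with hd
  have hKpos : 0 < K := by rw [hK]; positivity
  have habsd : |ny - na| ≤ d := abs_norm_sub_norm_le y a
  have hd0 : (0 : ℝ) ≤ d := norm_nonneg _
  have hna0 : 0 < na := by have := hna1; linarith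
  have hny0 : 0 < ny := by have := hy2; linarith
  set l : ℝ := ny / na with hl
  clear_value l
  have hl0 : 0 ≤ l := by rw [hl]; positivity
  have hcomb0 : ‖y - l • a‖ ^ 2 = ny ^ 2 + l * (d ^ 2 - ny ^ 2 - na ^ 2) + l ^ 2 * na ^ 2 := by
    have h1 : d ^ 2 = ny ^ 2 - 2 * (inner ℝ y a : ℝ) + na ^ 2 := norm_sub_sq_real y a
    have h2 : ‖y - l • a‖ ^ 2 = ny ^ 2 - 2 * (l * (inner ℝ y a : ℝ)) + l ^ 2 * na ^ 2 := by
      rw [norm_sub_sq_real, real_inner_smul_right, norm_smul, Real.norm_eq_abs, mul_pow, sq_abs]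
    linear_combination h2 - l * h1
  set L : ℝ := ‖y - l • a‖ ^ 2 with hLdef
  have hL0 : 0 ≤ L := by rw [hLdef]; positivity
  have hnormL : ‖y - l • a‖ = Real.sqrt L := by
    rw [hLdef, Real.sqrt_sq (norm_nonneg _)]
  set S : ℝ := Real.sqrt τ with hS
  have hS0 : 0 < S := Real.sqrt_pos.mpr hτpos
  have hSS : S * S = τ := Real.mul_self_sqrt hτpos.le
  have ha12 : Real.sqrt ((a 1) ^ 2 + (a 2) ^ 2) ≤ C₁ * S := by
    have h1 : (a - s • EuclideanSpace.single (0 : Fin 3) (1 : ℝ)) 1 = a 1 := by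
      rw [PiLp.sub_apply, PiLp.smul_apply, EuclideanSpace.single_apply]
      simp
    have h2 : (a - s • EuclideanSpace.single (0 : Fin 3) (1 : ℝ)) 2 = a 2 := by
      rw [PiLp.sub_apply, PiLp.smul_apply, EuclideanSpace.single_apply]
      simp
    calc Real.sqrt ((a 1) ^ 2 + (a 2) ^ 2)
        = Real.sqrt (((a - s • EuclideanSpace.single (0 : Fin 3) (1 : ℝ)) 1) ^ 2 +
          ((a - s • EuclideanSpace.single (0 : Fin 3) (1 : ℝ)) 2) ^ 2) := by rw [h1, h2]
      _ ≤ ‖a - s • EuclideanSpace.single (0 : Fin 3) (1 : ℝ)‖ := ptwo_le_norm _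
      _ ≤ C₁ * S := hdir
  have hsm : Real.sqrt (((l • a) 1) ^ 2 + ((l • a) 2) ^ 2)
      = l * Real.sqrt ((a 1) ^ 2 + (a 2) ^ 2) := by
    have g1 : (l • a) 1 = l * a 1 := by rw [PiLp.smul_apply, smul_eq_mul]
    have g2 : (l • a) 2 = l * a 2 := by rw [PiLp.smul_apply, smul_eq_mul]
    rw [g1, g2, mul_pow, mul_pow, ← mul_add, Real.sqrt_mul (sq_nonneg l), Real.sqrt_sq hl0]
  have htri : Real.sqrt ((y 1) ^ 2 + (y 2) ^ 2) ≤ Real.sqrt L + l * (C₁ * S) := by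
    have e1 : y 1 = (y - l • a) 1 + (l • a) 1 := by rw [PiLp.sub_apply]; ring
    have e2 : y 2 = (y - l • a) 2 + (l • a) 2 := by rw [PiLp.sub_apply]; ring
    calc Real.sqrt ((y 1) ^ 2 + (y 2) ^ 2)
        = Real.sqrt (((y - l • a) 1 + (l • a) 1) ^ 2 +
          ((y - l • a) 2 + (l • a) 2) ^ 2) := by rw [← e1, ← e2]
      _ ≤ Real.sqrt (((y - l • a) 1) ^ 2 + ((y - l • a) 2) ^ 2) +
          Real.sqrt (((l • a) 1) ^ 2 + ((l • a) 2) ^ 2) := ptwo_triangle _ _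
      _ ≤ ‖y - l • a‖ + l * Real.sqrt ((a 1) ^ 2 + (a 2) ^ 2) := by
          rw [hsm]
          gcongr
          exact ptwo_le_norm _
      _ ≤ Real.sqrt L + l * (C₁ * S) := by
          rw [hnormL]
          gcongr
  -- from now on, pure scalar arithmetic with opaque variables
  clear_value K ny na d L S
  clear hnormL hLdef hd hny hna
  have hT2ny : T ≤ 2 * ny := by linarith
  have hτ2na : τ ≤ 2 * na := by linarith
  have hw1 : ny - na ≤ d := (abs_le.mp habsd).2
  have hw2 : -d ≤ ny - na := (abs_le.mp habsd).1
  have hu0 : (0 : ℝ) ≤ R + T - τ := le_trans hd0 hy1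
  have hwl : (R + T - τ) - K ≤ ny - na := by rw [hK]; linarith
  have huT : R + T - τ ≤ T := by linarith
  have hfact : ((R + T - τ) - (ny - na)) * ((R + T - τ) + (ny - na)) ≤ K * (2 * T) :=
    mul_le_mul (by linarith) (by linarith) (by linarith) hKpos.le
  have hkey : d ^ 2 - (ny - na) ^ 2 ≤ 2 * K * (2 * ny) := by
    have hdu : d ^ 2 ≤ (R + T - τ) ^ 2 := by nlinarith
    have hKT : K * (2 * T) ≤ K * (2 * (2 * ny)) := by
      apply mul_le_mul_of_nonneg_left (by linarith) hKpos.le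
    nlinarith [hfact]
  have h6 : L * na = ny * (d ^ 2 - (ny - na) ^ 2) := by
    rw [hcomb0, hl]
    field_simp
    ring
  have hLbound : L * τ ≤ 8 * K * ny ^ 2 := by
    have b1 : L * τ ≤ L * (2 * na) := mul_le_mul_of_nonneg_left hτ2na hL0
    have b2 : ny * (d ^ 2 - (ny - na) ^ 2) ≤ ny * (2 * K * (2 * ny)) :=
      mul_le_mul_of_nonneg_left hkey hny0.le
    nlinarith [b1, b2, h6]
  have hsqrtL : Real.sqrt L ≤ Real.sqrt (8 * K) * ny / S := by
    have h7 : L ≤ 8 * K * ny ^ 2 / τ := by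
      rw [le_div_iff₀ hτpos]
      exact hLbound
    calc Real.sqrt L ≤ Real.sqrt (8 * K * ny ^ 2 / τ) := Real.sqrt_le_sqrt h7
      _ = Real.sqrt (8 * K) * ny / S := by
          rw [hS, show 8 * K * ny ^ 2 / τ = 8 * K * (ny ^ 2 / τ) by ring,
            Real.sqrt_mul (by positivity), Real.sqrt_div (sq_nonneg ny), Real.sqrt_sq hny0.le]
          ring
  have hlub : l ≤ 2 * ny / τ := by
    rw [hl, div_le_div_iff₀ hna0 hτpos]
    nlinarith [mul_le_mul_of_nonneg_left hτ2na hny0.le]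
  have hc1 : l * (C₁ * S) ≤ (2 * ny / τ) * (C₁ * S) :=
    mul_le_mul_of_nonneg_right hlub (by positivity)
  have hc2 : (2 * ny / τ) * (C₁ * S) = 2 * C₁ * ny / S := by
    rw [← hSS]
    field_simp
  have hc3 : Real.sqrt (8 * K) * ny / S + 2 * C₁ * ny / S ≤
      (Real.sqrt (8 * K) + 2 * C₁ + 1) * ny / S := by
    rw [← add_div, div_le_div_iff₀ hS0 hS0]
    nlinarith [mul_nonneg hny0.le hS0.le, Real.sqrt_nonneg (8 * K)]
  calc Real.sqrt ((y 1) ^ 2 + (y 2) ^ 2)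
      ≤ Real.sqrt L + l * (C₁ * S) := htri
    _ ≤ Real.sqrt (8 * K) * ny / S + 2 * C₁ * ny / S := by
        rw [← hc2]
        exact add_le_add hsqrtL hc1
    _ ≤ (Real.sqrt (8 * K) + 2 * C₁ + 1) * ny / S := hc3
    _ = ((Real.sqrt (8 * K) + 2 * C₁ + 1) * S⁻¹) * ny := by ring

/-- **Angular separation in the wave zone.** Let `x(t)` satisfy `x(0) = 0`,
`|t| - C₁ ≤ |x(t)| ≤ |t| + C₁` and `|x(t) - (t,0,0)| ≤ C₁|t|^{1/2}`, fix `R > 0`,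
`ν ∈ (0,1)` and `0 < ε < 2s_p/(1-ν) - 1`. Then there is a constant `A = A(C₁, R)` and, for
every `c > 0`, a threshold `N₀` such that for all `N ≥ N₀`, all times with `|t| ≥ N^{1-ε}`,
and all points `y = (y₁, y_{2,3})` of the region
`𝒢(t) ∩ C_ext(t) = {|y - x(sgn t · N^{1-ε})| ≤ R + |t| - N^{1-ε}} ∩ {|y| ≥ |t| - R}`,
one has `|y_{2,3}|/|y| ≤ A N^{-(1-ε)/2}`; moreover `A N^{-(1-ε)/2} ≤ c M/N` for every
`M ≥ N^{s_p/(1-ν)}`. -/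
theorem angular_separation_wave_zone (p sp : ℝ) (hp : 3 < p ∧ p < 5)
    (hsp : sp = 3 / 2 - 2 / (p - 1))
    (C₁ R : ℝ) (hC₁ : 0 < C₁) (hR : 0 < R)
    (xf : ℝ → E3) (hx0 : xf 0 = 0)
    (hlum : ∀ t : ℝ, |t| - C₁ ≤ ‖xf t‖ ∧ ‖xf t‖ ≤ |t| + C₁)
    (hdir : ∀ t : ℝ, ‖xf t - t • (EuclideanSpace.single (0 : Fin 3) (1 : ℝ))‖ ≤
      C₁ * |t| ^ ((1 : ℝ) / 2))
    (ν ε : ℝ) (hν : 0 < ν ∧ ν < 1) (hε : 0 < ε ∧ ε < 2 * sp / (1 - ν) - 1) :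
    ∃ A : ℝ, 0 < A ∧ ∀ c : ℝ, 0 < c → ∃ N₀ : ℝ, 0 < N₀ ∧ ∀ N : ℝ, N₀ ≤ N →
      (∀ t : ℝ, N ^ (1 - ε) ≤ |t| →
        ∀ y : E3,
          ‖y - xf (Real.sign t * N ^ (1 - ε))‖ ≤ R + |t| - N ^ (1 - ε) →
          |t| - R ≤ ‖y‖ →
          Real.sqrt ((y 1) ^ 2 + (y 2) ^ 2) ≤ (A * N ^ (-(1 - ε) / 2)) * ‖y‖) ∧
      (∀ M : ℝ, N ^ (sp / (1 - ν)) ≤ M → A * N ^ (-(1 - ε) / 2) ≤ c * M / N) := by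
  have hA8K : 0 ≤ Real.sqrt (8 * (2 * R + C₁)) := Real.sqrt_nonneg _
  refine ⟨Real.sqrt (8 * (2 * R + C₁)) + 2 * C₁ + 1, by positivity, ?_⟩
  set A : ℝ := Real.sqrt (8 * (2 * R + C₁)) + 2 * C₁ + 1 with hAdef
  have hA1 : 1 ≤ A := by rw [hAdef]; nlinarith
  have hApos : 0 < A := lt_of_lt_of_le one_pos hA1
  clear_value A
  intro c hc
  set β : ℝ := sp / (1 - ν) with hβ
  set α : ℝ := β - (1 + ε) / 2 with hα
  have hαpos : 0 < α := by
    have h2 : 2 * sp / (1 - ν) = 2 * β := by rw [hβ]; ring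
    rw [hα]; rw [h2] at hε; linarith [hε.2]
  clear_value β α
  refine ⟨max (max 1 ((A / c) ^ α⁻¹)) (if ε < 1 then (2 * C₁ + 2 * R + 1) ^ (1 - ε)⁻¹ else 0),
    lt_of_lt_of_le one_pos (le_max_of_le_left (le_max_left _ _)), ?_⟩
  intro N hN
  have hN1 : (1 : ℝ) ≤ N := le_trans (le_max_of_le_left (le_max_left _ _)) hN
  have hN0 : (0 : ℝ) < N := lt_of_lt_of_le one_pos hN1
  have hNα : (A / c) ^ α⁻¹ ≤ N := le_trans (le_max_of_le_left (le_max_right _ _)) hN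
  have hNB : (if ε < 1 then (2 * C₁ + 2 * R + 1) ^ (1 - ε)⁻¹ else 0) ≤ N :=
    le_trans (le_max_right _ _) hN
  constructor
  · -- geometric part
    intro t ht y hy1 hy2
    have hτpos : 0 < N ^ (1 - ε) := Real.rpow_pos_of_pos hN0 _
    have hexp : N ^ (-(1 - ε) / 2) = (Real.sqrt (N ^ (1 - ε)))⁻¹ := by
      have hSτ : Real.sqrt (N ^ (1 - ε)) = N ^ ((1 - ε) / 2) := by
        rw [Real.sqrt_eq_rpow, ← Real.rpow_mul hN0.le]
        congr 1
        ring
      rw [show -(1 - ε) / 2 = -((1 - ε) / 2) by ring, Real.rpow_neg hN0.le, hSτ]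
    by_cases hε1 : ε < 1
    · rw [if_pos hε1] at hNB
      have hbase : (0 : ℝ) ≤ 2 * C₁ + 2 * R + 1 := by positivity
      have hτbig : 2 * C₁ + 2 * R + 1 ≤ N ^ (1 - ε) := by
        have hne : (1 : ℝ) - ε ≠ 0 := ne_of_gt (by linarith)
        have h := Real.rpow_le_rpow (Real.rpow_nonneg hbase _) hNB
          (by linarith : (0:ℝ) ≤ 1 - ε)
        rwa [Real.rpow_inv_rpow hbase hne] at h
      have htne : t ≠ 0 := by
        intro h; rw [h] at ht; simp at ht; linarith
      have habs_s : |Real.sign t * N ^ (1 - ε)| = N ^ (1 - ε) := by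
        rw [abs_mul, abs_of_pos hτpos]
        rcases lt_trichotomy t 0 with h | h | h
        · rw [Real.sign_of_neg h]; norm_num
        · exact absurd h htne
        · rw [Real.sign_of_pos h]; norm_num
      have hna1 := (hlum (Real.sign t * N ^ (1 - ε))).1
      have hna2 := (hlum (Real.sign t * N ^ (1 - ε))).2
      rw [habs_s] at hna1 hna2
      have hdir' := hdir (Real.sign t * N ^ (1 - ε))
      rw [habs_s, ← Real.sqrt_eq_rpow] at hdir'
      rw [hexp, hAdef]
      exact geom_core C₁ R (N ^ (1 - ε)) |t| (Real.sign t * N ^ (1 - ε))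
        (xf (Real.sign t * N ^ (1 - ε))) y hC₁ hR hτbig ht hna1 hna2 hdir' hy1 hy2
    · push_neg at hε1
      have h2 : 1 ≤ N ^ (-(1 - ε) / 2) := by
        calc (1 : ℝ) = N ^ (0 : ℝ) := (Real.rpow_zero N).symm
          _ ≤ N ^ (-(1 - ε) / 2) := Real.rpow_le_rpow_of_exponent_le hN1 (by linarith)
      have h1 : Real.sqrt ((y 1) ^ 2 + (y 2) ^ 2) ≤ ‖y‖ := ptwo_le_norm y
      have h3 : (1 : ℝ) * 1 ≤ A * N ^ (-(1 - ε) / 2) :=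
        mul_le_mul hA1 h2 one_pos.le hApos.le
      nlinarith [norm_nonneg y]
  · intro M hM
    have hAc : A ≤ c * N ^ α := by
      have h1 : ((A / c) ^ α⁻¹) ^ α = A / c :=
        Real.rpow_inv_rpow (by positivity) (ne_of_gt hαpos)
      have h2 : ((A / c) ^ α⁻¹) ^ α ≤ N ^ α :=
        Real.rpow_le_rpow (Real.rpow_nonneg (by positivity) _) hNα hαpos.le
      rw [h1] at h2
      calc A = c * (A / c) := by field_simp
        _ ≤ c * N ^ α := mul_le_mul_of_nonneg_left h2 hc.le
    calc A * N ^ (-(1 - ε) / 2) ≤ (c * N ^ α) * N ^ (-(1 - ε) / 2) :=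
          mul_le_mul_of_nonneg_right hAc (Real.rpow_nonneg hN0.le _)
      _ = c * N ^ (α + -(1 - ε) / 2) := by rw [Real.rpow_add hN0]; ring
      _ = c * N ^ (β - 1) := by rw [show α + -(1 - ε) / 2 = β - 1 by rw [hα]; ring]
      _ = c * N ^ β / N := by rw [Real.rpow_sub hN0, Real.rpow_one]; ring
      _ ≤ c * M / N := by gcongr
end
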